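/- Let (Y_j)_{j≥0} be a sequence of maps from a metric space M into ℝⁿ, converging pointwise to Y, and let d be the metric on M. Suppose that for each j ≥ 1, ‖Y_j - Y_{j-1}‖ is bounded by ε_j on some exhausting compact sets, where 2·ε_j < (1/j²)·inf{ |Y_{j-1}(p) - Y_{j-1}(q)| : p, q in the j-th compact set, d(p,q) > 1/j }, and each Y_j is injective on its domain. Then for any two distinct points p ≠ q in the union of the compact sets, Y(p) ≠ Y(q); i.e., the limit map Y is injective. -/
import Mathlib


open Filter Metric

set_option maxHeartbeats 1600000

/-- Injectivity of the limit map: if `Y_j → Y` pointwise on a metric space `M`,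
each `Y_j` is injective on the exhausting compact set `K j`, and the step errors
`ε_j` satisfy `2 ε_j < (1/j²)·|Y_{j-1}(p) - Y_{j-1}(q)|` for points of `K j`
at mutual distance `> 1/j`, then `Y` is injective on `⋃ K j`. -/
theorem limit_injective
    {n : ℕ} {M : Type*} [MetricSpace M]
    (K : ℕ → Set M) (hKcomp : ∀ j, IsCompact (K j)) (hKmono : Monotone K)
    (Y : ℕ → M → EuclideanSpace ℝ (Fin n)) (Ylim : M → EuclideanSpace ℝ (Fin n))
    (hconv : ∀ p, Tendsto (fun j => Y j p) atTop (nhds (Ylim p)))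
    (ε : ℕ → ℝ) (hε : ∀ j, 0 < ε j)
    (hstep : ∀ j : ℕ, 1 ≤ j → ∀ p ∈ K (j - 1), dist (Y j p) (Y (j - 1) p) < ε j)
    (hεsmall : ∀ j : ℕ, 1 ≤ j → ∀ p ∈ K j, ∀ q ∈ K j, dist p q > 1 / (j : ℝ) →
      2 * ε j < (1 / (j : ℝ) ^ 2) * dist (Y (j - 1) p) (Y (j - 1) q))
    (hinj : ∀ j, Set.InjOn (Y j) (K j)) :
    ∀ p ∈ ⋃ j, K j, ∀ q ∈ ⋃ j, K j, p ≠ q → Ylim p ≠ Ylim q := by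
  intro p hp q hq hpq
  obtain ⟨jp, hjp⟩ := Set.mem_iUnion.1 hp
  obtain ⟨jq, hjq⟩ := Set.mem_iUnion.1 hq
  have hd : 0 < dist p q := dist_pos.2 hpq
  obtain ⟨N, hN⟩ := exists_nat_gt (1 / dist p q)
  set j0 : ℕ := max (max jp jq) (max N 2) with hj0def
  have hj0ge2 : 2 ≤ j0 := le_trans (le_max_right N 2) (le_max_right _ _)
  have hj0pos : (0:ℝ) < (j0:ℝ) := by positivity
  have hpK : p ∈ K j0 := hKmono (le_trans (le_max_left jp jq) (le_max_left _ _)) hjp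
  have hqK : q ∈ K j0 := hKmono (le_trans (le_max_right jp jq) (le_max_left _ _)) hjq
  have hNj0 : (N:ℝ) ≤ (j0:ℝ) := by
    exact_mod_cast le_trans (le_max_left N 2) (le_max_right _ _)
  have hdj0 : 1 / (j0:ℝ) < dist p q := by
    rw [div_lt_iff₀ hj0pos]
    have h1 : 1 / dist p q < (j0:ℝ) := lt_of_lt_of_le hN hNj0
    rw [div_lt_iff₀ hd] at h1
    linarith
  -- distances
  obtain ⟨a, ha⟩ : ∃ a : ℕ → ℝ, ∀ j, a j = dist (Y j p) (Y j q) :=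
    ⟨fun j => dist (Y j p) (Y j q), fun _ => rfl⟩
  have ha0 : 0 < a j0 := by
    rw [ha]
    exact dist_pos.2 fun h => hpq (hinj j0 hpK hqK h)
  -- step inequality
  have step : ∀ j : ℕ, j0 + 1 ≤ j → (1 - 1 / (j:ℝ)^2) * a (j - 1) ≤ a j := by
    intro j hj
    have hj1 : 1 ≤ j := le_trans (by omega) hj
    have hjm : j0 ≤ j - 1 := by omega
    have hpKj1 : p ∈ K (j - 1) := hKmono hjm hpK
    have hqKj1 : q ∈ K (j - 1) := hKmono hjm hqK
    have hpKj : p ∈ K j := hKmono (by omega) hpK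
    have hqKj : q ∈ K j := hKmono (by omega) hqK
    have hjR : (j0:ℝ) ≤ (j:ℝ) := by exact_mod_cast le_trans (by omega) hj
    have hjpos : (0:ℝ) < (j:ℝ) := lt_of_lt_of_le hj0pos hjR
    have hdj : dist p q > 1 / (j:ℝ) := by
      refine lt_of_le_of_lt ?_ hdj0
      exact one_div_le_one_div_of_le hj0pos hjR
    have hsm := hεsmall j hj1 p hpKj q hqKj hdj
    have h1 := hstep j hj1 p hpKj1
    have h2 := hstep j hj1 q hqKj1
    have htri : a (j-1) ≤ a j + dist (Y j p) (Y (j-1) p) + dist (Y j q) (Y (j-1) q) := by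
      calc a (j-1) = dist (Y (j-1) p) (Y (j-1) q) := ha _
        _ ≤ dist (Y (j-1) p) (Y j p) + dist (Y j p) (Y (j-1) q) := dist_triangle _ _ _
        _ ≤ dist (Y (j-1) p) (Y j p) + (dist (Y j p) (Y j q) + dist (Y j q) (Y (j-1) q)) := by
            gcongr; exact dist_triangle _ _ _
        _ = a j + dist (Y j p) (Y (j-1) p) + dist (Y j q) (Y (j-1) q) := by
            rw [ha, dist_comm (Y (j-1) p)]; ring
    rw [← ha] at hsm
    nlinarith [hsm, h1, h2, htri]
  -- main induction
  have main : ∀ m : ℕ, (1 - (1 / (j0:ℝ) - 1 / ((j0:ℝ) + m))) * a j0 ≤ a (j0 + m) := by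
    intro m
    induction m with
    | zero => simp
    | succ m ih =>
      have hstep' := step (j0 + m + 1) (by omega)
      have hsub : j0 + m + 1 - 1 = j0 + m := by omega
      rw [hsub] at hstep'
      have hcast : ((j0 + m + 1 : ℕ) : ℝ) = (j0:ℝ) + m + 1 := by push_cast; ring
      rw [hcast] at hstep'
      have ht : (2:ℝ) ≤ (j0:ℝ) + m := by
        have : (2:ℝ) ≤ (j0:ℝ) := by exact_mod_cast hj0ge2
        have hm : (0:ℝ) ≤ (m:ℝ) := Nat.cast_nonneg m
        linarith
      have htpos : (0:ℝ) < (j0:ℝ) + m := by linarith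
      have ht1pos : (0:ℝ) < (j0:ℝ) + m + 1 := by linarith
      have hj0le : (j0:ℝ) ≤ (j0:ℝ) + m := by
        have hm : (0:ℝ) ≤ (m:ℝ) := Nat.cast_nonneg m
        linarith
      have h2j0 : (2:ℝ) ≤ (j0:ℝ) := by exact_mod_cast hj0ge2
      -- factor inequality
      have hfac : (1 - (1 / (j0:ℝ) - 1 / ((j0:ℝ) + m + 1)))
          ≤ (1 - 1 / ((j0:ℝ) + m + 1)^2) * (1 - (1 / (j0:ℝ) - 1 / ((j0:ℝ) + m))) := by
        set t : ℝ := (j0:ℝ) + m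
        have h1 : 1 / (t+1) ≤ 1 / t := one_div_le_one_div_of_le htpos (by linarith)
        have h2 : 1 / ((j0:ℝ)+m) ≤ 1 / (j0:ℝ) := one_div_le_one_div_of_le hj0pos hj0le
        have hx1 : 1 - (1 / (j0:ℝ) - 1 / t) ≤ 1 := by
          have : 1 / t ≤ 1 / (j0:ℝ) := h2
          linarith
        have hu : (0:ℝ) < 1 / (t+1)^2 := by positivity
        have key : 1 / t - 1 / (t+1) = 1 / (t * (t+1)) := by
          field_simp
          try ring
        have key2 : 1 / (t * (t+1)) ≥ 1 / (t+1)^2 := by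
          apply one_div_le_one_div_of_le
          · positivity
          · nlinarith
        nlinarith [mul_nonneg (le_of_lt hu) (sub_nonneg.2 hx1)]
      calc (1 - (1 / (j0:ℝ) - 1 / ((j0:ℝ) + (m+1:ℕ)))) * a j0
          = (1 - (1 / (j0:ℝ) - 1 / ((j0:ℝ) + m + 1))) * a j0 := by push_cast; ring
        _ ≤ (1 - 1 / ((j0:ℝ) + m + 1)^2) * ((1 - (1 / (j0:ℝ) - 1 / ((j0:ℝ) + m))) * a j0) := by
            rw [← mul_assoc]; exact mul_le_mul_of_nonneg_right hfac (le_of_lt ha0)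
        _ ≤ (1 - 1 / ((j0:ℝ) + m + 1)^2) * a (j0 + m) := by
            apply mul_le_mul_of_nonneg_left ih
            have : 1 / ((j0:ℝ) + m + 1)^2 ≤ 1 := by
              rw [div_le_one (by positivity)]
              nlinarith
            linarith
        _ ≤ a (j0 + (m+1)) := by
            have : j0 + (m+1) = j0 + m + 1 := by omega
            rw [this]; exact hstep'
  -- a j ≥ a j0 / 2 for j ≥ j0
  have hbound : ∀ j : ℕ, j0 ≤ j → a j0 / 2 ≤ a j := by
    intro j hj
    obtain ⟨m, rfl⟩ := Nat.exists_eq_add_of_le hj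
    refine le_trans ?_ (main m)
    have h2j0 : (2:ℝ) ≤ (j0:ℝ) := by exact_mod_cast hj0ge2
    have hm : (0:ℝ) ≤ (m:ℝ) := Nat.cast_nonneg m
    have h1 : 1 / (j0:ℝ) ≤ 1 / 2 := one_div_le_one_div_of_le (by norm_num) h2j0
    have h2 : (0:ℝ) < 1 / ((j0:ℝ) + m) := by positivity
    have hfac2 : (1:ℝ)/2 ≤ 1 - (1 / (j0:ℝ) - 1 / ((j0:ℝ) + m)) := by linarith
    calc a j0 / 2 = (1/2) * a j0 := by ring
      _ ≤ (1 - (1 / (j0:ℝ) - 1 / ((j0:ℝ) + m))) * a j0 :=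
          mul_le_mul_of_nonneg_right hfac2 ha0.le
  -- pass to the limit
  have hlim : Tendsto (fun j => a j) atTop (nhds (dist (Ylim p) (Ylim q))) := by
    simp only [ha]
    exact (hconv p).dist (hconv q)
  have hfin : a j0 / 2 ≤ dist (Ylim p) (Ylim q) :=
    ge_of_tendsto hlim (eventually_atTop.2 ⟨j0, hbound⟩)
  intro h
  rw [h, dist_self] at hfin
  linarith
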